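/- arXiv:2511.21870 — 4 statements merged into one kernel-verified Lean document; each statement's English description precedes it below -/
import Mathlib

section
/- Let a, b, c, d, e be positive real numbers with a + b + c + d + e = 1. Define α₁ = min(a+b, c+d+e) − min(a+b, e), α₂ = min(c+d, a+b+e) − min(c+d, e), β₁ = min(a, b+c+d+e) − min(a, b+d+e), β₂ = min(c, a+b+d+e) − min(c, b+d+e), γ₁ = min(b, a+c+d+e) − min(b, a+c+e), γ₂ = min(d, a+b+c+e) − min(d, a+c+e). Then max(α₁, α₂) ≥ max(β₁, β₂) + max(γ₁, γ₂). -/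
/-! In fraction form `J_W(X|Y) = min n_Y (max 0 (n_X - n_Z))`, which is monotone in `n_X`, `n_Y` and
antitone in `n_Z`; hence each of `β₁, β₂, γ₁, γ₂` is bounded by `α₁` or `α₂`. Moreover the `β`s and the
`γ`s cannot both be nonzero: `γ₁` or `γ₂` is positive only if `b` or `d` exceeds `a + c + e`, and then
`a, c ≤ b + d + e`, so both `β`s vanish. -/

/-- `J_W(X|Y) = S_X - E_W(X:Z)` for a Haar random state, where `x, y, z` are the qudit fractions of
`X`, `Y` and the purifier `Z`, so that `S_X = min x (y + z)` and `E_W(X:Z) = min x z`. -/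
def condCorr (x y z : ℝ) : ℝ := min x (y + z) - min x z

lemma condCorr_eq_min_max {y : ℝ} (hy : 0 ≤ y) (x z : ℝ) :
    condCorr x y z = min y (max 0 (x - z)) := by
  unfold condCorr
  rcases le_total x z with hxz | hzx
  · rw [min_eq_left hxz, min_eq_left (by linarith), max_eq_left (by linarith), min_eq_right hy,
      sub_self]
  · rw [min_eq_right hzx, max_eq_right (by linarith), ← min_sub_sub_right, add_sub_cancel_right,
      min_comm]

lemma condCorr_mono {x x' y y' z z' : ℝ} (hy : 0 ≤ y) (hx : x ≤ x') (hyy : y ≤ y') (hz : z' ≤ z) :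
    condCorr x y z ≤ condCorr x' y' z' := by
  rw [condCorr_eq_min_max hy, condCorr_eq_min_max (hy.trans hyy)]
  gcongr

lemma condCorr_eq_zero_of_le {x y z : ℝ} (hy : 0 ≤ y) (hxz : x ≤ z) : condCorr x y z = 0 := by
  rw [condCorr_eq_min_max hy, max_eq_left (by linarith), min_eq_right hy]

lemma max_condCorr_eq_zero {x y z : ℝ} (hx : 0 ≤ x) (hy : 0 ≤ y) (hxz : x ≤ z) (hyz : y ≤ z) :
    max (condCorr x y z) (condCorr y x z) = 0 := by
  rw [condCorr_eq_zero_of_le hy hxz, condCorr_eq_zero_of_le hx hyz, max_self]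

theorem condCorr_strong_superadditive {a b c d e : ℝ}
    (ha : 0 ≤ a) (hb : 0 ≤ b) (hc : 0 ≤ c) (hd : 0 ≤ d) (he : 0 ≤ e) :
    max (condCorr a c (b + d + e)) (condCorr c a (b + d + e))
        + max (condCorr b d (a + c + e)) (condCorr d b (a + c + e))
      ≤ max (condCorr (a + b) (c + d) e) (condCorr (c + d) (a + b) e) := by
  have hβα : max (condCorr a c (b + d + e)) (condCorr c a (b + d + e))
      ≤ max (condCorr (a + b) (c + d) e) (condCorr (c + d) (a + b) e) :=
    max_le_max (condCorr_mono hc (by linarith) (by linarith) (by linarith))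
      (condCorr_mono ha (by linarith) (by linarith) (by linarith))
  have hγα : max (condCorr b d (a + c + e)) (condCorr d b (a + c + e))
      ≤ max (condCorr (a + b) (c + d) e) (condCorr (c + d) (a + b) e) :=
    max_le_max (condCorr_mono hd (by linarith) (by linarith) (by linarith))
      (condCorr_mono hb (by linarith) (by linarith) (by linarith))
  by_cases hγ : b ≤ a + c + e ∧ d ≤ a + c + e
  · rw [max_condCorr_eq_zero hb hd hγ.1 hγ.2, add_zero]
    exact hβα
  · have hβ : a ≤ b + d + e ∧ c ≤ b + d + e := by
      rw [not_and_or, not_le, not_le] at hγ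
      constructor <;> rcases hγ with h | h <;> linarith
    rw [max_condCorr_eq_zero ha hc hβ.1 hβ.2, zero_add]
    exact hγα

theorem stmt_0_general (a b c d e : ℝ)
    (ha : 0 < a) (hb : 0 < b) (hc : 0 < c) (hd : 0 < d) (he : 0 < e) :
    max (min (a + b) (c + d + e) - min (a + b) e)
        (min (c + d) (a + b + e) - min (c + d) e)
      ≥ max (min a (b + c + d + e) - min a (b + d + e))
            (min c (a + b + d + e) - min c (b + d + e))
        + max (min b (a + c + d + e) - min b (a + c + e))
              (min d (a + b + c + e) - min d (a + c + e)) := by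
  have h := condCorr_strong_superadditive ha.le hb.le hc.le hd.le he.le
  simp only [condCorr] at h
  convert h using 3 <;> ring_nf

theorem stmt_0 (a b c d e : ℝ)
    (ha : 0 < a) (hb : 0 < b) (hc : 0 < c) (hd : 0 < d) (he : 0 < e)
    (hsum : a + b + c + d + e = 1) :
    max (min (a + b) (c + d + e) - min (a + b) e)
        (min (c + d) (a + b + e) - min (c + d) e)
      ≥ max (min a (b + c + d + e) - min a (b + d + e))
            (min c (a + b + d + e) - min c (b + d + e))
        + max (min b (a + c + d + e) - min b (a + c + e))
              (min d (a + b + c + e) - min d (a + c + e)) :=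
  stmt_0_general a b c d e ha hb hc hd he
end

section
/- Let a, b, c, d, e be positive real numbers with a + b + c + d + e = 1. Assume: (A1) min(a+b, c+d+e) − min(a+b, e) ≥ min(c+d, a+b+e) − min(c+d, e); (A2) min(a, b+c+d+e) − min(a, b+d+e) ≥ min(c, a+b+d+e) − min(c, b+d+e); (A3) min(d, a+b+c+e) − min(d, a+c+e) ≥ min(b, a+c+d+e) − min(b, a+c+e). Then min(a+b, c+d+e) + min(a, b+d+e) + min(d, a+c+e) ≥ min(a, b+c+d+e) + min(d, a+b+c+e) + min(a+b, e). -/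
/-!
The classical correlation `J(X|Y)` of a Haar random state vanishes once `X` is no larger than
the complement of `XY`, and it grows with `X` and `Y` and shrinks as that complement grows.
Since `a > b + d + e` and `d > a + c + e` cannot both hold, one of `β₁ = J(A|C)`,
`γ₂ = J(D|B)` vanishes. If `β₁ = 0`, monotonicity gives `γ₂ ≤ J(CD|AB) = α₂ ≤ α₁` by (A1);
if `γ₂ = 0`, it gives `β₁ ≤ J(AB|CD) = α₁` directly.
-/

/-- `J_W(X|Y)` for a Haar random state, where `x`, `y` are the qudit fractions of `X`, `Y`
and `r` is that of the complement of `XY`. -/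
def classicalCorrelation (x y r : ℝ) : ℝ := min x (y + r) - min x r

theorem classicalCorrelation_eq_zero_of_le {x y r : ℝ} (hxr : x ≤ r) (hy : 0 ≤ y) :
    classicalCorrelation x y r = 0 := by
  rw [classicalCorrelation, min_eq_left hxr, min_eq_left (by linarith), sub_self]

theorem classicalCorrelation_mono {x x' y y' r r' : ℝ} (hx : x ≤ x') (hy : y ≤ y')
    (hr : r' ≤ r) (hy₀ : 0 ≤ y) :
    classicalCorrelation x y r ≤ classicalCorrelation x' y' r' := by
  unfold classicalCorrelation
  rcases min_cases x (y + r) with ⟨h₁, h₁'⟩ | ⟨h₁, h₁'⟩ <;>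
  rcases min_cases x r with ⟨h₂, h₂'⟩ | ⟨h₂, h₂'⟩ <;>
  rcases min_cases x' (y' + r') with ⟨h₃, h₃'⟩ | ⟨h₃, h₃'⟩ <;>
  rcases min_cases x' r' with ⟨h₄, h₄'⟩ | ⟨h₄, h₄'⟩ <;>
  linarith

theorem stmt_1_general (a b c d e : ℝ)
    (ha : 0 < a) (hb : 0 < b) (hc : 0 < c) (hd : 0 < d) (he : 0 < e)
    (hA1 : min (a + b) (c + d + e) - min (a + b) e
            ≥ min (c + d) (a + b + e) - min (c + d) e) :
    min (a + b) (c + d + e) + min a (b + d + e) + min d (a + c + e)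
      ≥ min a (b + c + d + e) + min d (a + b + c + e) + min (a + b) e := by
  have hβ : min a (b + c + d + e) - min a (b + d + e) = classicalCorrelation a c (b + d + e) := by
    rw [classicalCorrelation, show b + c + d + e = c + (b + d + e) by ring]
  have hγ : min d (a + b + c + e) - min d (a + c + e) = classicalCorrelation d b (a + c + e) := by
    rw [classicalCorrelation, show a + b + c + e = b + (a + c + e) by ring]
  have hα : classicalCorrelation (a + b) (c + d) e = min (a + b) (c + d + e) - min (a + b) e := rfl
  suffices classicalCorrelation a c (b + d + e) + classicalCorrelation d b (a + c + e)
      ≤ classicalCorrelation (a + b) (c + d) e by linarith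
  by_cases hab : a ≤ b + d + e
  · rw [classicalCorrelation_eq_zero_of_le hab hc.le, zero_add]
    calc classicalCorrelation d b (a + c + e)
        ≤ classicalCorrelation (c + d) (a + b) e :=
          classicalCorrelation_mono (by linarith) (by linarith) (by linarith) hb.le
      _ ≤ classicalCorrelation (a + b) (c + d) e := hA1
  · have hdac : d ≤ a + c + e := by linarith
    rw [classicalCorrelation_eq_zero_of_le hdac hb.le, add_zero]
    exact classicalCorrelation_mono (by linarith) (by linarith) (by linarith) hc.le

theorem stmt_1 (a b c d e : ℝ)
    (ha : 0 < a) (hb : 0 < b) (hc : 0 < c) (hd : 0 < d) (he : 0 < e)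
    (hsum : a + b + c + d + e = 1)
    (hA1 : min (a + b) (c + d + e) - min (a + b) e
            ≥ min (c + d) (a + b + e) - min (c + d) e)
    (hA2 : min a (b + c + d + e) - min a (b + d + e)
            ≥ min c (a + b + d + e) - min c (b + d + e))
    (hA3 : min d (a + b + c + e) - min d (a + c + e)
            ≥ min b (a + c + d + e) - min b (a + c + e)) :
    min (a + b) (c + d + e) + min a (b + d + e) + min d (a + c + e)
      ≥ min a (b + c + d + e) + min d (a + b + c + e) + min (a + b) e :=
  stmt_1_general a b c d e ha hb hc hd he hA1
end

section
/- For every real p with 0 ≤ p ≤ 1, let s = √(p(1−p)), λ₊ = 1/4 + s/2, and λ₋ = 1/4 − s/2. Then 2·(−λ₊·log λ₊ − λ₋·log λ₋) ≥ 2·(−(1/2 + s)·log(1/2 + s) − (1/2 − s)·log(1/2 − s)), where log denotes the natural logarithm and the convention 0·log 0 = 0 is used (as with Mathlib's Real.log, for which log 0 = 0). -/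
/-!
Put `a = 1/4 + s/2` and `b = 1/4 - s/2`, so that `1/2 ± s` are `2a` and `2b`, and write
`η x = -x log x`. Doubling the arguments gives `η(2a) + η(2b) = 2(η a + η b) - 2(a + b) log 2`,
so the claim is `η a + η b ≤ 2(a + b) log 2`. Concavity of `η` at the midpoint bounds the left side
by `-(a + b) log ((a + b)/2)`, which suffices as soon as `a + b ≥ 1/2`. Since `η` is concave on the
closed half-line `[0, ∞)` (with `η 0 = 0`), the boundary case `b = 0` needs no separate treatment.
-/

open Real

theorem Real.sqrt_mul_one_sub_le_half (p : ℝ) : √(p * (1 - p)) ≤ 1 / 2 :=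
  sqrt_le_iff.2 ⟨by norm_num, by nlinarith [sq_nonneg (p - 1 / 2)]⟩

theorem Real.negMulLog_add_negMulLog_le {a b : ℝ} (ha : 0 ≤ a) (hb : 0 ≤ b) :
    negMulLog a + negMulLog b ≤ 2 * negMulLog ((a + b) / 2) := by
  have h := concaveOn_negMulLog.2 (Set.mem_Ici.2 ha) (Set.mem_Ici.2 hb)
    (by norm_num : (0 : ℝ) ≤ 1 / 2) (by norm_num : (0 : ℝ) ≤ 1 / 2) (by norm_num)
  simp only [smul_eq_mul] at h
  rw [show (a + b) / 2 = 1 / 2 * a + 1 / 2 * b by ring]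
  linarith

theorem Real.negMulLog_two_mul (x : ℝ) :
    negMulLog (2 * x) = 2 * negMulLog x - 2 * x * log 2 := by
  rw [negMulLog_mul, negMulLog]
  ring

theorem Real.negMulLog_two_mul_add_le {a b : ℝ} (ha : 0 ≤ a) (hb : 0 ≤ b)
    (hab : 1 ≤ 2 * (a + b)) :
    negMulLog (2 * a) + negMulLog (2 * b) ≤ negMulLog a + negMulLog b := by
  set c := a + b
  have hc : 0 < c := by linarith
  have hlog : log (c / 2) = log (2 * c) - 2 * log 2 := by
    rw [show 2 * c = c / 2 * 2 ^ 2 by ring, log_mul (by positivity) (by positivity), log_pow]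
    push_cast
    ring
  have hconcave : negMulLog a + negMulLog b ≤ c * (2 * log 2 - log (2 * c)) := by
    have h : negMulLog a + negMulLog b ≤ 2 * negMulLog (c / 2) := negMulLog_add_negMulLog_le ha hb
    rw [show negMulLog (c / 2) = -(c / 2) * log (c / 2) from rfl, hlog] at h
    linarith
  have hlog_nonneg : 0 ≤ c * log (2 * c) := mul_nonneg hc.le (log_nonneg hab)
  rw [negMulLog_two_mul, negMulLog_two_mul]
  linarith

theorem stmt_9_general (p : ℝ) :
    2 * (-((1/4 + Real.sqrt (p * (1 - p)) / 2) * Real.log (1/4 + Real.sqrt (p * (1 - p)) / 2))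
         - (1/4 - Real.sqrt (p * (1 - p)) / 2) * Real.log (1/4 - Real.sqrt (p * (1 - p)) / 2))
      ≥ 2 * (-((1/2 + Real.sqrt (p * (1 - p))) * Real.log (1/2 + Real.sqrt (p * (1 - p))))
             - (1/2 - Real.sqrt (p * (1 - p))) * Real.log (1/2 - Real.sqrt (p * (1 - p)))) := by
  set s := √(p * (1 - p))
  have hs : s ≤ 1 / 2 := sqrt_mul_one_sub_le_half p
  have key := negMulLog_two_mul_add_le (a := 1 / 4 + s / 2) (b := 1 / 4 - s / 2)
    (by positivity) (by linarith) (by linarith)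
  rw [show 2 * (1 / 4 + s / 2) = 1 / 2 + s by ring,
    show 2 * (1 / 4 - s / 2) = 1 / 2 - s by ring] at key
  simp only [negMulLog, neg_mul] at key
  linarith

theorem stmt_9 (p : ℝ) (hp0 : 0 ≤ p) (hp1 : p ≤ 1) :
    2 * (-((1/4 + Real.sqrt (p * (1 - p)) / 2) * Real.log (1/4 + Real.sqrt (p * (1 - p)) / 2))
         - (1/4 - Real.sqrt (p * (1 - p)) / 2) * Real.log (1/4 - Real.sqrt (p * (1 - p)) / 2))
      ≥ 2 * (-((1/2 + Real.sqrt (p * (1 - p))) * Real.log (1/2 + Real.sqrt (p * (1 - p))))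
             - (1/2 - Real.sqrt (p * (1 - p))) * Real.log (1/2 - Real.sqrt (p * (1 - p)))) :=
  stmt_9_general p
end

section
/- Let λ₁ = (17 + 3√21)/32 and λ₂ = (5 − √21)/32. Then (1/4)·((9/4)·log(3/4) + (7/4)·log(7/4)) < (1/2)·(−λ₁·log λ₁ − 3·λ₂·log λ₂), where log denotes the natural logarithm. -/
/-!
Both sides are bounded through `log x ≤ x - 1` alone. On the left, `log (3/4) = (log (9/8) - log 2)/2`
and `log (7/4) = log (7/8) + log 2` give `I ≤ (5/32) log 2 - 5/256`. On the right, `9/2 < √21 < 23/5`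
gives `λ₁ (1 - λ₁) ≥ 3/80` and `1/80 ≤ λ₂ ≤ 1/64`, so `S_R/2 ≥ 3/160 + (9/80) log 2`. The two bounds
are separated as soon as `log 2 < 7/8`.
-/

namespace Real

lemma mul_one_sub_le_negMulLog {x : ℝ} (hx : 0 ≤ x) : x * (1 - x) ≤ negMulLog x := by
  rcases hx.eq_or_lt with rfl | hx
  · simp
  · have := mul_le_mul_of_nonneg_left (log_le_sub_one_of_pos hx) hx.le
    rw [negMulLog]
    linarith

lemma mul_log_inv_le_negMulLog {x c : ℝ} (hx : 0 < x) (hxc : x ≤ c) :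
    x * log c⁻¹ ≤ negMulLog x := by
  rw [negMulLog, log_inv, neg_mul, ← mul_neg]
  exact mul_le_mul_of_nonneg_left (neg_le_neg (log_le_log hx hxc)) hx.le

lemma log_three_div_four_le : log (3 / 4) ≤ (1 / 8 - log 2) / 2 := by
  have h : log (9 / 8) = 2 * log (3 / 4) + log 2 := by
    rw [show (9 / 8 : ℝ) = (3 / 4) ^ 2 * 2 by norm_num, log_mul (by norm_num) (by norm_num),
      log_pow]
    norm_num
  linarith [log_le_sub_one_of_pos (show (0 : ℝ) < 9 / 8 by norm_num)]

lemma log_seven_div_four_le : log (7 / 4) ≤ log 2 - 1 / 8 := by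
  have h : log (7 / 4) = log (7 / 8) + log 2 := by
    rw [← log_mul (by norm_num) (by norm_num)]
    norm_num
  linarith [log_le_sub_one_of_pos (show (0 : ℝ) < 7 / 8 by norm_num)]

lemma sqrt_twentyOne_mem_Ioo : √21 ∈ Set.Ioo (9 / 2 : ℝ) (23 / 5) := by
  constructor
  · rw [lt_sqrt (by norm_num)]; norm_num
  · rw [sqrt_lt' (by norm_num)]; norm_num

end Real

open Real

lemma werner_mutualInformation_le :
    (1/4 : ℝ) * ((9/4) * log (3/4) + (7/4) * log (7/4)) ≤ 5 / 32 * log 2 - 5 / 256 := by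
  linarith [log_three_div_four_le, log_seven_div_four_le]

lemma werner_half_reflectedEntropy_ge :
    3 / 160 + 9 / 80 * log 2 ≤ (1/2) * (-(((17 + 3 * √21) / 32) * log ((17 + 3 * √21) / 32))
      - 3 * (((5 - √21) / 32) * log ((5 - √21) / 32))) := by
  obtain ⟨hlo, hhi⟩ := sqrt_twentyOne_mem_Ioo
  have hsq : √21 ^ 2 = 21 := sq_sqrt (by norm_num)
  have h₁ := mul_one_sub_le_negMulLog (x := (17 + 3 * √21) / 32) (by positivity)
  have h₂ := mul_log_inv_le_negMulLog (x := (5 - √21) / 32) (c := 1 / 64)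
    (by linarith) (by linarith)
  have hlog64 : log (1 / 64)⁻¹ = 6 * log 2 := by
    rw [show (1 / 64 : ℝ)⁻¹ = 2 ^ 6 by norm_num, log_pow]
    norm_num
  have hentropy₁ : 3 / 80 ≤ (17 + 3 * √21) / 32 * (1 - (17 + 3 * √21) / 32) := by nlinarith
  have hentropy₂ : 1 / 80 * (6 * log 2) ≤ (5 - √21) / 32 * (6 * log 2) :=
    mul_le_mul_of_nonneg_right (by linarith) (by positivity)
  rw [hlog64] at h₂
  simp only [negMulLog, neg_mul] at h₁ h₂
  linarith

theorem stmt_11 :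
    (1/4 : ℝ) * ((9/4) * Real.log (3/4) + (7/4) * Real.log (7/4))
      < (1/2) * (-(((17 + 3 * Real.sqrt 21) / 32) * Real.log ((17 + 3 * Real.sqrt 21) / 32))
                 - 3 * (((5 - Real.sqrt 21) / 32) * Real.log ((5 - Real.sqrt 21) / 32))) := by
  linarith [werner_mutualInformation_le, werner_half_reflectedEntropy_ge, log_two_lt_d9]
end
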